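/- arXiv:1709.10013 — 2 statements merged into one kernel-verified Lean document; each statement's English description precedes it below -/
import Mathlib

section
/- Fix n ≥ 3 and regard the n+1 parameters a_{01}, a_{21}, a_{32}, …, a_{n,n−1}, a_{1n} as indeterminates. Let c_0, …, c_{n−1}, d_0, …, d_{n−2} be the coefficients of the n-compartment cycle model. Then the determinant of the (n+1)×(n+1) Jacobian matrix of the map (c_0, c_{n−1}, d_0, d_1, …, d_{n−2}) with respect to the n+1 parameters equals, up to sign, a_{32}a_{43}⋯a_{n,n−1}a_{1n} · ∏_{2 ≤ i < j ≤ n} (a_{i+1,i} − a_{j+1,j}), where a_{n+1,n} denotes a_{1n}. -/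
open MvPolynomial

/-- Index `i : Fin (m+3)` recast in `Fin (m+2)` as `i - 1`. -/
def subOne' {m : ℕ} (i : Fin (m + 3)) : Fin (m + 2) :=
  ⟨i.val - 1, by have := i.isLt; omega⟩

/-- The cycle compartmental matrix with `n = m + 3` compartments:
`A 0 0 = -a₀₁ - a₂₁`, `A 0 (n-1) = a_{1n}`, subdiagonal `A (i+1) i = a_{i+2,i+1}`,
diagonal `A i i = -a_{i+2,i+1}` for `i ≥ 1`, all other entries `0`.
Here `b k` is `a_{k+3,k+2}` for `k = 0,…,m`, and `b (m+1) = a_{1n}`. -/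
def cycMatrix {R : Type*} [CommRing R] (m : ℕ) (a01 a21 : R) (b : Fin (m + 2) → R) :
    Matrix (Fin (m + 3)) (Fin (m + 3)) R :=
  Matrix.of fun i j =>
    if i = 0 ∧ j = 0 then -a01 - a21
    else if i = 0 ∧ j.val = m + 2 then b (Fin.last (m + 1))
    else if i.val = j.val + 1 then (if j = 0 then a21 else b (subOne' j))
    else if i = j then -(b (subOne' i))
    else 0

/-- Index type for the `n + 1` parameters of the cycle model (`n = m + 3`):
`.inl 0 ↦ a₀₁`, `.inl 1 ↦ a₂₁`, `.inr k ↦ a_{k+3,k+2}` (with `.inr (m+1) ↦ a_{1n}`). -/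
abbrev CycIx (m : ℕ) := Fin 2 ⊕ Fin (m + 2)

/-- The cycle compartmental matrix with the parameters as indeterminates. -/
noncomputable def cycA (m : ℕ) :
    Matrix (Fin (m + 3)) (Fin (m + 3)) (MvPolynomial (CycIx m) ℝ) :=
  cycMatrix m (X (Sum.inl 0)) (X (Sum.inl 1)) (fun k => X (Sum.inr k))

/-- The tuple `(c₀, c_{n-1}, d₀, d₁, …, d_{n-2})` of coefficients of the cycle model:
`.inl 0 ↦ c₀`, `.inl 1 ↦ c_{n-1}`, `.inr k ↦ d_k`, where `c_i` is the coefficient of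
`λ^i` in `det (λI - A)` and `d_i` that in `det (λI - A₁₁)`. -/
noncomputable def cycSelCoeff (m : ℕ) : CycIx m → MvPolynomial (CycIx m) ℝ :=
  Sum.elim
    (fun t : Fin 2 => if t = 0 then (cycA m).charpoly.coeff 0
      else (cycA m).charpoly.coeff (m + 2))
    (fun k => ((cycA m).submatrix Fin.succ Fin.succ).charpoly.coeff k.val)

/-- The `(n+1) × (n+1)` Jacobian matrix of `(c₀, c_{n-1}, d₀, …, d_{n-2})` with respect
to the `n + 1` parameters of the cycle model. -/
noncomputable def cycSelJac (m : ℕ) : Matrix (CycIx m) (CycIx m) (MvPolynomial (CycIx m) ℝ) :=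
  Matrix.of fun s t => MvPolynomial.pderiv t (cycSelCoeff m s)

/-- The polynomial `a₃₂a₄₃⋯a_{n,n-1}a_{1n} · ∏_{2 ≤ i < j ≤ n} (a_{i+1,i} - a_{j+1,j})`
(where `a_{n+1,n}` denotes `a_{1n}`). -/
noncomputable def cycSing (m : ℕ) : MvPolynomial (CycIx m) ℝ :=
  (∏ k : Fin (m + 2), X (Sum.inr k)) *
    ∏ p ∈ Finset.univ.filter (fun p : Fin (m + 2) × Fin (m + 2) => p.1 < p.2),
      (X (Sum.inr p.1) - X (Sum.inr p.2))

/-!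
Since `A₁₁` is lower triangular, `det (λI - A₁₁) = ∏ (λ + a_{k+1,k})` does not involve `a₀₁, a₂₁`,
while `c₀ = a₀₁ ∏ a_{k+1,k}` and `c_{n-1} = a₀₁ + a₂₁ + ∑ a_{k+1,k}`. Hence the Jacobian is block
upper triangular, its `2 × 2` block has determinant `∏ a_{k+1,k}`, and column `j` of the other
block is the coefficient vector of `∏_{l ≠ j} (λ + a_{l+1,l})`. The Vandermonde matrix of the
nodes `-a_{i+1,i}` times this block is diagonal, with entries `∏_{l ≠ i} (a_{l+1,l} - a_{i+1,i})`,
so the block's determinant is the Vandermonde product up to sign.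
-/

open Finset Matrix

section ProdXAddC

variable {R σ ι : Type*} [CommSemiring R]

theorem pderiv_coeff_prod_X_add_C_of_forall_ne (s : Finset ι) (x : ι → σ) {v : σ}
    (h : ∀ l ∈ s, x l ≠ v) (k : ℕ) :
    pderiv v ((∏ l ∈ s, (Polynomial.X + Polynomial.C (X (x l) : MvPolynomial σ R))).coeff k)
      = 0 := by
  revert k
  refine prod_induction _ (fun q : Polynomial (MvPolynomial σ R) => ∀ k, pderiv v (q.coeff k) = 0)
    (fun p q hp hq k => ?_) (fun k => ?_) (fun l hl k => ?_)
  · simp [Polynomial.coeff_mul, Derivation.leibniz, hp, hq]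
  · rw [Polynomial.coeff_one]; split_ifs <;> simp
  · rw [Polynomial.coeff_add, Polynomial.coeff_C, Polynomial.coeff_X]
    split_ifs <;> simp [pderiv_X_of_ne (h l hl)]

theorem pderiv_prod_X_of_forall_ne (s : Finset ι) (x : ι → σ) {v : σ} (h : ∀ l ∈ s, x l ≠ v) :
    pderiv v (∏ l ∈ s, (X (x l) : MvPolynomial σ R)) = 0 :=
  prod_induction _ (fun q => pderiv v q = 0) (fun p q hp hq => by simp [Derivation.leibniz, hp, hq])
    (pderiv v).map_one_eq_zero fun l hl => pderiv_X_of_ne (h l hl)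

theorem pderiv_coeff_prod_X_add_C_self [DecidableEq ι] (s : Finset ι) {x : ι → σ}
    (hx : Function.Injective x) {j : ι} (hj : j ∈ s) (k : ℕ) :
    pderiv (x j) ((∏ l ∈ s, (Polynomial.X + Polynomial.C (X (x l) : MvPolynomial σ R))).coeff k)
      = (∏ l ∈ s.erase j, (Polynomial.X + Polynomial.C (X (x l)))).coeff k := by
  have hconst := pderiv_coeff_prod_X_add_C_of_forall_ne (R := R) (s.erase j) x
    (fun l hl => hx.ne (ne_of_mem_erase hl))
  rw [← mul_prod_erase s _ hj, add_mul, Polynomial.coeff_add, Polynomial.coeff_C_mul, map_add,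
    Derivation.leibniz, hconst, pderiv_X_self]
  cases k with
  | zero => simp
  | succ k => simp [Polynomial.coeff_X_mul, hconst]

end ProdXAddC

section ErasedProdCoeffMatrix

variable {R : Type*} [CommRing R] {n : ℕ}

noncomputable def erasedProdCoeffMatrix (x : Fin n → R) : Matrix (Fin n) (Fin n) R :=
  Matrix.of fun k j => (∏ l ∈ univ.erase j, (Polynomial.X + Polynomial.C (x l))).coeff k

theorem vandermonde_neg_mul_erasedProdCoeffMatrix (x : Fin n → R) :
    vandermonde (-x) * erasedProdCoeffMatrix x =
      diagonal fun i => ∏ l ∈ univ.erase i, (x l - x i) := by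
  ext i j
  have hdeg : (∏ l ∈ univ.erase j, (Polynomial.X + Polynomial.C (x l))).natDegree < n := by
    have hfactor (l : Fin n) : (Polynomial.X + Polynomial.C (x l)).natDegree ≤ 1 := by
      rw [Polynomial.natDegree_add_C]; exact Polynomial.natDegree_X_le
    have hle := (Polynomial.natDegree_prod_le (univ.erase j) _).trans
      (sum_le_card_nsmul _ _ 1 fun l _ => hfactor l)
    rw [card_erase_of_mem (mem_univ j), card_univ, Fintype.card_fin, smul_eq_mul, mul_one] at hle
    have := j.pos
    omega
  have heval : (vandermonde (-x) * erasedProdCoeffMatrix x) i j =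
      (∏ l ∈ univ.erase j, (Polynomial.X + Polynomial.C (x l))).eval (-x i) := by
    rw [Polynomial.eval_eq_sum_range' hdeg, ← Fin.sum_univ_eq_sum_range, mul_apply]
    exact sum_congr rfl fun k _ => by
      rw [vandermonde_apply, erasedProdCoeffMatrix, of_apply, Pi.neg_apply, mul_comm]
  rw [heval, Polynomial.eval_prod]
  simp only [Polynomial.eval_add, Polynomial.eval_X, Polynomial.eval_C, neg_add_eq_sub]
  by_cases hij : i = j
  · rw [hij, diagonal_apply_eq]
  · rw [diagonal_apply_ne _ hij]
    exact prod_eq_zero (mem_erase.mpr ⟨hij, mem_univ i⟩) (sub_self _)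

theorem det_erasedProdCoeffMatrix [IsDomain R] {x : Fin n → R} (hx : Function.Injective x) :
    (erasedProdCoeffMatrix x).det = ∏ i, ∏ j ∈ Ioi i, (x j - x i) := by
  have hV : (vandermonde (-x)).det = ∏ i, ∏ j ∈ Ioi i, (x i - x j) := by
    simp only [det_vandermonde, Pi.neg_apply, neg_sub_neg]
  have hV0 : (vandermonde (-x)).det ≠ 0 := by
    rw [hV]
    exact prod_ne_zero_iff.mpr fun i _ => prod_ne_zero_iff.mpr fun j hj =>
      sub_ne_zero.mpr (hx.ne (ne_of_lt (mem_Ioi.mp hj)))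
  have hprod := congrArg det (vandermonde_neg_mul_erasedProdCoeffMatrix x)
  simp only [det_mul, det_diagonal, ← compl_singleton] at hprod
  rw [← prod_prod_Ioi_mul_eq_prod_prod_off_diag fun l i => x l - x i] at hprod
  simp only [prod_mul_distrib] at hprod
  refine mul_left_cancel₀ hV0 ?_
  rw [hprod, hV, mul_comm]

end ErasedProdCoeffMatrix

section CycMatrix

variable {R : Type*} [CommRing R] (m : ℕ) (a01 a21 : R) (b : Fin (m + 2) → R)

@[simp]
theorem subOne'_succ (i : Fin (m + 2)) : subOne' i.succ = i := by
  ext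
  simp [subOne']

theorem cycMatrix_zero_zero : cycMatrix m a01 a21 b 0 0 = -a01 - a21 := by
  simp [cycMatrix]

theorem cycMatrix_zero_last : cycMatrix m a01 a21 b 0 (Fin.last _) = b (Fin.last _) := by
  simp [cycMatrix]

theorem cycMatrix_zero_of_ne {j : Fin (m + 3)} (h0 : j ≠ 0) (hlast : j ≠ Fin.last _) :
    cycMatrix m a01 a21 b 0 j = 0 := by
  have : j.val ≠ m + 2 := fun h => hlast (Fin.ext h)
  simp [cycMatrix, h0, this, Ne.symm h0]

theorem cycMatrix_succ_succ_self (i : Fin (m + 2)) :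
    cycMatrix m a01 a21 b i.succ i.succ = -b i := by
  simp [cycMatrix]

theorem isLowerTriangular_cycMatrix_submatrix_succ :
    ((cycMatrix m a01 a21 b).submatrix Fin.succ Fin.succ).IsLowerTriangular := by
  intro i j (hij : i < j)
  have h1 : ¬ i.val = j.val + 1 := by omega
  simp [cycMatrix, h1, hij.ne]

theorem det_cycMatrix_submatrix_succ :
    ((cycMatrix m a01 a21 b).submatrix Fin.succ Fin.succ).det = ∏ i, -b i := by
  rw [det_of_isLowerTriangular _ (isLowerTriangular_cycMatrix_submatrix_succ m a01 a21 b)]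
  simp [cycMatrix_succ_succ_self]

theorem charpoly_cycMatrix_submatrix_succ :
    ((cycMatrix m a01 a21 b).submatrix Fin.succ Fin.succ).charpoly =
      ∏ i, (Polynomial.X + Polynomial.C (b i)) := by
  rw [charpoly, det_of_isLowerTriangular _
    (isLowerTriangular_cycMatrix_submatrix_succ m a01 a21 b).charmatrix]
  simp [cycMatrix_succ_succ_self, sub_eq_add_neg]

theorem cycMatrix_one_zero : cycMatrix m a01 a21 b 1 0 = a21 := by
  simp [cycMatrix]

theorem cycMatrix_succ_succ_castSucc_succ (i : Fin (m + 1)) :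
    cycMatrix m a01 a21 b i.succ.succ i.castSucc.succ = b i.castSucc := by
  simp [cycMatrix]

theorem isUpperTriangular_cycMatrix_submatrix_succ_castSucc :
    ((cycMatrix m a01 a21 b).submatrix Fin.succ Fin.castSucc).IsUpperTriangular := by
  intro i j (hij : j < i)
  have h1 : ¬ i.val = j.val := by omega
  have h2 : i.succ ≠ j.castSucc := by simp [Fin.ext_iff]; omega
  simp [cycMatrix, h1, h2]

theorem det_cycMatrix_submatrix_succ_castSucc :
    ((cycMatrix m a01 a21 b).submatrix Fin.succ Fin.castSucc).det =
      a21 * ∏ i : Fin (m + 1), b i.castSucc := by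
  rw [det_of_isUpperTriangular (isUpperTriangular_cycMatrix_submatrix_succ_castSucc m a01 a21 b),
    Fin.prod_univ_succ]
  simp [cycMatrix_one_zero, cycMatrix_succ_succ_castSucc_succ]

theorem det_cycMatrix :
    (cycMatrix m a01 a21 b).det = (-1) ^ (m + 3) * (a01 * ∏ k, b k) := by
  rw [det_succ_row_zero, Fintype.sum_eq_add 0 (Fin.last _) Fin.last_pos.ne
    fun j hj => by rw [cycMatrix_zero_of_ne m a01 a21 b hj.1 hj.2, mul_zero, zero_mul]]
  rw [Fin.succAbove_zero, Fin.succAbove_last, det_cycMatrix_submatrix_succ,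
    det_cycMatrix_submatrix_succ_castSucc, cycMatrix_zero_zero, cycMatrix_zero_last,
    prod_neg, Fin.prod_univ_castSucc b]
  simp only [Fin.val_zero, Fin.val_last, card_univ, Fintype.card_fin]
  ring

theorem cycMatrix_charpoly_coeff_zero :
    (cycMatrix m a01 a21 b).charpoly.coeff 0 = a01 * ∏ k, b k := by
  have h := det_eq_sign_charpoly_coeff (cycMatrix m a01 a21 b)
  rw [det_cycMatrix, Fintype.card_fin] at h
  exact ((isUnit_neg_one.pow _).mul_left_cancel h).symm

theorem trace_cycMatrix : (cycMatrix m a01 a21 b).trace = -(a01 + a21 + ∑ k, b k) := by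
  rw [trace, Fin.sum_univ_succ]
  simp only [diag_apply, cycMatrix_zero_zero, cycMatrix_succ_succ_self, sum_neg_distrib]
  ring

theorem cycMatrix_charpoly_coeff_add_two :
    (cycMatrix m a01 a21 b).charpoly.coeff (m + 2) = a01 + a21 + ∑ k, b k := by
  have h := trace_eq_neg_charpoly_coeff (cycMatrix m a01 a21 b)
  rw [trace_cycMatrix, Fintype.card_fin, show m + 3 - 1 = m + 2 from rfl] at h
  exact (neg_injective h).symm

end CycMatrix

theorem prod_filter_fst_lt_snd {α M : Type*} [CommMonoid M] [Fintype α] [LinearOrder α]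
    [LocallyFiniteOrderTop α] (f : α × α → M) :
    ∏ p ∈ univ.filter (fun p : α × α => p.1 < p.2), f p = ∏ i, ∏ j ∈ Ioi i, f (i, j) := by
  rw [prod_filter, Fintype.prod_prod_type]
  refine prod_congr rfl fun i _ => ?_
  rw [← prod_filter]
  congr 1
  ext j
  simp

section Jacobian

variable (m : ℕ)

theorem cycSelCoeff_inl_zero :
    cycSelCoeff m (Sum.inl 0) = X (Sum.inl 0) * ∏ k, X (Sum.inr k) :=
  cycMatrix_charpoly_coeff_zero m _ _ _

theorem cycSelCoeff_inl_one :
    cycSelCoeff m (Sum.inl 1) = X (Sum.inl 0) + X (Sum.inl 1) + ∑ k, X (Sum.inr k) :=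
  cycMatrix_charpoly_coeff_add_two m _ _ _

theorem cycSelCoeff_inr (k : Fin (m + 2)) :
    cycSelCoeff m (Sum.inr k) =
      (∏ l, (Polynomial.X + Polynomial.C (X (Sum.inr l) : MvPolynomial (CycIx m) ℝ))).coeff k := by
  rw [cycSelCoeff, Sum.elim_inr, cycA, charpoly_cycMatrix_submatrix_succ]

theorem cycSelJac_toBlocks₁₁ :
    (cycSelJac m).toBlocks₁₁ = !![∏ k, X (Sum.inr k), 0; 1, 1] := by
  have hprod (t : Fin 2) : pderiv (Sum.inl t) (∏ k : Fin (m + 2), X (Sum.inr k) :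
      MvPolynomial (CycIx m) ℝ) = 0 :=
    pderiv_prod_X_of_forall_ne _ _ fun k _ => Sum.inr_ne_inl
  ext s t
  fin_cases s <;> fin_cases t <;>
    simp [toBlocks₁₁, cycSelJac, cycSelCoeff_inl_zero, cycSelCoeff_inl_one, hprod,
      Derivation.leibniz, pderiv_X]

theorem cycSelJac_toBlocks₂₁ : (cycSelJac m).toBlocks₂₁ = 0 := by
  ext k t : 1
  rw [toBlocks₂₁, of_apply, cycSelJac, of_apply, cycSelCoeff_inr, Matrix.zero_apply]
  exact pderiv_coeff_prod_X_add_C_of_forall_ne _ _ (fun l _ => Sum.inr_ne_inl) _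

theorem cycSelJac_toBlocks₂₂ :
    (cycSelJac m).toBlocks₂₂ = erasedProdCoeffMatrix fun k => X (Sum.inr k) := by
  ext k j : 1
  rw [toBlocks₂₂, of_apply, cycSelJac, of_apply, cycSelCoeff_inr, erasedProdCoeffMatrix, of_apply]
  exact pderiv_coeff_prod_X_add_C_self _ Sum.inr_injective (mem_univ j) _

theorem det_cycSelJac :
    (cycSelJac m).det =
      (∏ k, X (Sum.inr k)) * ∏ i, ∏ j ∈ Ioi i, (X (Sum.inr j) - X (Sum.inr i)) := by
  rw [← fromBlocks_toBlocks (cycSelJac m), cycSelJac_toBlocks₂₁, det_fromBlocks_zero₂₁,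
    cycSelJac_toBlocks₁₁, cycSelJac_toBlocks₂₂, det_fin_two_of,
    det_erasedProdCoeffMatrix (x := fun k => X (Sum.inr k))
      ((X_injective (R := ℝ)).comp Sum.inr_injective)]
  ring

end Jacobian

/-- For the `n`-compartment cycle model (`n = m + 3 ≥ 3`), the
determinant of the `(n+1)×(n+1)` Jacobian of `(c₀, c_{n-1}, d₀, …, d_{n-2})` equals,
up to sign, `a₃₂a₄₃⋯a_{n,n-1}a_{1n} · ∏_{2 ≤ i < j ≤ n} (a_{i+1,i} - a_{j+1,j})`. -/
theorem cycSelJac_det (m : ℕ) :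
    (cycSelJac m).det = cycSing m ∨ (cycSelJac m).det = -cycSing m := by
  have hsign : ∏ i, ∏ j ∈ Ioi i, (X (Sum.inr j) - X (Sum.inr i) : MvPolynomial (CycIx m) ℝ) =
      (-1) ^ #(univ.filter fun p : Fin (m + 2) × Fin (m + 2) => p.1 < p.2) *
        ∏ p ∈ univ.filter (fun p : Fin (m + 2) × Fin (m + 2) => p.1 < p.2),
          (X (Sum.inr p.1) - X (Sum.inr p.2)) := by
    rw [← prod_neg, prod_filter_fst_lt_snd fun p => -(X (Sum.inr p.1) - X (Sum.inr p.2))]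
    simp only [neg_sub]
  rw [det_cycSelJac, hsign, cycSing, mul_left_comm]
  rcases neg_one_pow_eq_or (MvPolynomial (CycIx m) ℝ)
    #(univ.filter fun p : Fin (m + 2) × Fin (m + 2) => p.1 < p.2) with h | h <;> simp [h]
end

section
/- Fix n ≥ 2 and let ψ : ℝ^{2n−1} → ℝ^{2n−1} be the coefficient map of the n-compartment mammillary model, sending the parameter vector (a_{21}, …, a_{n1}, a_{01}, a_{12}, …, a_{1n}) to (c_0, …, c_{n−1}, d_0, …, d_{n−2}). Let p be a point whose coordinates a_{12}, …, a_{1n} are pairwise distinct and all nonzero. Then the fiber ψ^{−1}(ψ(p)) has exactly (n−1)! elements. That is, the identifiability degree of the mammillary model is (n−1)!. -/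
open MvPolynomial

/-- Index `k : Fin (m+2)` (a compartment `k+1 ∈ {2,…,n}`, `k ≥ 1`) recast in `Fin (m+1)`
(as `k - 1 ∈ {0,…,n-2}`). -/
def subOne {m : ℕ} (k : Fin (m + 2)) : Fin (m + 1) :=
  ⟨k.val - 1, by have := k.isLt; omega⟩

/-- The mammillary (star) compartmental matrix with `n = m + 2` compartments:
`A 0 0 = -a₀₁ - (a₂₁ + ⋯ + a_{n1})`, first row `a_{1k}`, first column `a_{k1}`,
diagonal `-a_{1k}`, all other entries `0`.  Here `aK1 k = a_{k+2,1}` and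
`a1K k = a_{1,k+2}` for `k : Fin (m+1)`. -/
def mamMatrix {R : Type*} [CommRing R] (m : ℕ) (a01 : R) (aK1 a1K : Fin (m + 1) → R) :
    Matrix (Fin (m + 2)) (Fin (m + 2)) R :=
  Matrix.of fun i j =>
    if i = 0 then (if j = 0 then -a01 - ∑ k, aK1 k else a1K (subOne j))
    else if j = 0 then aK1 (subOne i)
    else if i = j then -(a1K (subOne i)) else 0

/-- Index type for the `2n - 1` parameters of the mammillary model (`n = m + 2`):
`.inl 0 ↦ a₀₁`, `.inl (k+1) ↦ a_{k+2,1}`, `.inr k ↦ a_{1,k+2}`. -/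
abbrev MamIx (m : ℕ) := Fin (m + 2) ⊕ Fin (m + 1)

/-- The mammillary compartmental matrix with the parameters as indeterminates. -/
noncomputable def mamA (m : ℕ) :
    Matrix (Fin (m + 2)) (Fin (m + 2)) (MvPolynomial (MamIx m) ℝ) :=
  mamMatrix m (X (Sum.inl 0)) (fun k => X (Sum.inl k.succ)) (fun k => X (Sum.inr k))

/-- The coefficient map of the mammillary model: `.inl i ↦ c_i` (coefficient of `λ^i` in
`det (λI - A)`), `.inr i ↦ d_i` (coefficient of `λ^i` in `det (λI - A₁₁)`). -/
noncomputable def mamCoeff (m : ℕ) : MamIx m → MvPolynomial (MamIx m) ℝ :=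
  Sum.elim (fun i => (mamA m).charpoly.coeff i.val)
    (fun i => ((mamA m).submatrix Fin.succ Fin.succ).charpoly.coeff i.val)

/-- The coefficient map `ψ : ℝ^{2n-1} → ℝ^{2n-1}` of the mammillary model, sending the
parameters `(a₂₁,…,a_{n1},a₀₁,a₁₂,…,a_{1n})` to `(c₀,…,c_{n-1},d₀,…,d_{n-2})`. -/
noncomputable def mamPhi (m : ℕ) (p : MamIx m → ℝ) : MamIx m → ℝ :=
  fun s => MvPolynomial.eval p (mamCoeff m s)



lemma subOne_succ {m : ℕ} (k : Fin (m + 1)) : subOne k.succ = k := by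
  ext; simp [subOne]

lemma prod_succAbove {M : Type*} [CommMonoid M] {n : ℕ} (f : Fin (n + 1) → M) (k : Fin (n + 1)) :
    ∏ j, f (k.succAbove j) = ∏ j ∈ Finset.univ.erase k, f j := by
  have h : Finset.univ.erase k = Finset.univ.image k.succAbove := by
    ext y; simp [eq_comm, Fin.exists_succAbove_eq_iff]
  rw [h, Finset.prod_image fun x _ y _ h => Fin.succAbove_right_injective h]

section Arrow
variable {R : Type*} [CommRing R]

/-- Arrowhead matrix. -/
def arrowM (m : ℕ) (t : R) (u v d : Fin (m + 1) → R) : Matrix (Fin (m + 2)) (Fin (m + 2)) R :=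
  Matrix.of fun i j =>
    if i = 0 then (if j = 0 then t else u (subOne j))
    else if j = 0 then v (subOne i) else if i = j then d (subOne i) else 0

lemma arrowM_succ_succ (m : ℕ) (t : R) (u v d : Fin (m + 1) → R) (i j : Fin (m + 1)) :
    arrowM m t u v d i.succ j.succ = if i = j then d i else 0 := by
  simp [arrowM, Fin.succ_ne_zero, Fin.succ_inj, subOne_succ]

lemma arrow_det (m : ℕ) (t : R) (u v d : Fin (m + 1) → R) :
    (arrowM m t u v d).det
      = t * ∏ k, d k - ∑ k, u k * v k * ∏ j ∈ Finset.univ.erase k, d j := by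
  rw [Matrix.det_succ_column_zero, Fin.sum_univ_succ]
  have h0 : ((arrowM m t u v d).submatrix Fin.succ Fin.succ) = Matrix.diagonal d := by
    ext i j
    rw [Matrix.submatrix_apply, arrowM_succ_succ, Matrix.diagonal]
    split <;> simp_all
  have hsub : ∀ k : Fin (m + 1),
      ((arrowM m t u v d).submatrix (Fin.succAbove k.succ) Fin.succ).det
        = (-1 : R) ^ (k : ℕ) * u k * ∏ j ∈ Finset.univ.erase k, d j := by
    intro k
    rw [Matrix.det_succ_row_zero]
    have hrow0 : ∀ b : Fin (m + 1),
        (arrowM m t u v d).submatrix (Fin.succAbove k.succ) Fin.succ 0 b = u b := by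
      intro b
      have : (k.succ).succAbove 0 = 0 := by
        rw [Fin.succAbove_of_castSucc_lt] <;> simp [Fin.succ_pos]
      simp [Matrix.submatrix_apply, this, arrowM, Fin.succ_ne_zero, subOne_succ]
    have hP : ∀ (b : Fin (m + 1)) (a c : Fin m),
        ((arrowM m t u v d).submatrix (Fin.succAbove k.succ) Fin.succ).submatrix
          Fin.succ (Fin.succAbove b) a c
        = if k.succAbove a = b.succAbove c then d (k.succAbove a) else 0 := by
      intro b a c
      simp only [Matrix.submatrix_apply, Fin.succ_succAbove_succ]
      rw [arrowM_succ_succ]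
    rw [Finset.sum_eq_single k]
    · rw [hrow0]
      have : (((arrowM m t u v d).submatrix (Fin.succAbove k.succ) Fin.succ).submatrix
          Fin.succ (Fin.succAbove k)) = Matrix.diagonal (fun a => d (k.succAbove a)) := by
        ext a c
        rw [hP, Matrix.diagonal]
        by_cases h : a = c
        · simp [h]
        · have : k.succAbove a ≠ k.succAbove c := fun hh => h (Fin.succAbove_right_injective hh)
          simp [h, this]
      rw [this, Matrix.det_diagonal, prod_succAbove]
    · intro b _ hbk
      obtain ⟨a0, ha0⟩ := Fin.exists_succAbove_eq (x := b) (y := k) hbk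
      have : (((arrowM m t u v d).submatrix (Fin.succAbove k.succ) Fin.succ).submatrix
          Fin.succ (Fin.succAbove b)).det = 0 := by
        apply Matrix.det_eq_zero_of_row_eq_zero a0
        intro c
        rw [hP, ha0, if_neg (Fin.ne_succAbove b c) ]
      rw [this]; ring
    · simp
  have hc0 : ∀ k : Fin (m + 1), arrowM m t u v d k.succ 0 = v k := by
    intro k; simp [arrowM, Fin.succ_ne_zero, subOne_succ]
  simp only [h0, Matrix.det_diagonal, hsub, hc0]
  have harr00 : arrowM m t u v d 0 0 = t := by simp [arrowM]
  rw [harr00]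
  have : ∀ k : Fin (m + 1),
      (-1 : R) ^ ((k.succ : Fin (m+2)) : ℕ) * v k *
        ((-1 : R) ^ (k : ℕ) * u k * ∏ j ∈ Finset.univ.erase k, d j)
      = -(u k * v k * ∏ j ∈ Finset.univ.erase k, d j) := by
    intro k
    have : ((-1 : R) ^ ((k.succ : Fin (m+2)) : ℕ) * (-1 : R) ^ (k : ℕ)) = -1 := by
      rw [← pow_add]
      exact Odd.neg_one_pow ⟨(k : ℕ), by rw [Fin.val_succ]; ring⟩
    calc (-1 : R) ^ ((k.succ : Fin (m+2)) : ℕ) * v k *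
        ((-1 : R) ^ (k : ℕ) * u k * ∏ j ∈ Finset.univ.erase k, d j)
        = ((-1 : R) ^ ((k.succ : Fin (m+2)) : ℕ) * (-1 : R) ^ (k : ℕ)) *
          (v k * u k * ∏ j ∈ Finset.univ.erase k, d j) := by ring
      _ = _ := by rw [this]; ring
  rw [Finset.sum_congr rfl fun k _ => this k]
  have hz : (Fin.succAbove (0 : Fin (m+2))) = Fin.succ := funext fun j => Fin.zero_succAbove j
  rw [hz, h0, Matrix.det_diagonal, Finset.sum_neg_distrib]
  simp
  ring



variable {R : Type*} [CommRing R]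

lemma mam_charmatrix (m : ℕ) (a01 : R) (aK1 a1K : Fin (m + 1) → R) :
    Matrix.charmatrix (mamMatrix m a01 aK1 a1K)
      = arrowM m (Polynomial.X + Polynomial.C (a01 + ∑ k, aK1 k)) (fun k => -Polynomial.C (a1K k)) (fun k => -Polynomial.C (aK1 k))
          (fun k => Polynomial.X + Polynomial.C (a1K k)) := by
  refine Matrix.ext fun i j => ?_
  by_cases h : i = j
  · subst h
    rw [Matrix.charmatrix_apply_eq]
    by_cases hi : i = 0
    · subst hi
      simp [mamMatrix, arrowM, Polynomial.C_sub, Polynomial.C_neg]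
      ring
    · simp [mamMatrix, arrowM, Polynomial.C_neg, hi]
  · rw [Matrix.charmatrix_apply_ne _ _ _ h]
    by_cases hi : i = 0 <;> by_cases hj : j = 0 <;>
      simp_all [mamMatrix, arrowM]

lemma mam_charpoly (m : ℕ) (a01 : R) (aK1 a1K : Fin (m + 1) → R) :
    (mamMatrix m a01 aK1 a1K).charpoly
      = (Polynomial.X + Polynomial.C (a01 + ∑ k, aK1 k)) * ∏ k, (Polynomial.X + Polynomial.C (a1K k))
        - ∑ k, Polynomial.C (a1K k * aK1 k) * ∏ j ∈ Finset.univ.erase k, (Polynomial.X + Polynomial.C (a1K j)) := by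
  rw [Matrix.charpoly, mam_charmatrix, arrow_det]
  congr 1
  refine Finset.sum_congr rfl fun k _ => ?_
  rw [neg_mul_neg, ← Polynomial.C_mul]

lemma mam_submatrix (m : ℕ) (a01 : R) (aK1 a1K : Fin (m + 1) → R) :
    (mamMatrix m a01 aK1 a1K).submatrix Fin.succ Fin.succ
      = Matrix.diagonal (fun k => -(a1K k)) := by
  ext i j
  rw [Matrix.submatrix_apply, Matrix.diagonal]
  by_cases h : i = j
  · simp [h, mamMatrix, Fin.succ_ne_zero, subOne_succ]
  · have : i.succ ≠ j.succ := fun hh => h (Fin.succ_injective _ hh)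
    simp [h, this, mamMatrix, Fin.succ_ne_zero]

lemma charpoly_diagonal {n : Type*} [DecidableEq n] [Fintype n] (v : n → R) :
    (Matrix.diagonal v).charpoly = ∏ i, (Polynomial.X - Polynomial.C (v i)) := by
  rw [Matrix.charpoly]
  have : Matrix.charmatrix (Matrix.diagonal v) = Matrix.diagonal (fun i => Polynomial.X - Polynomial.C (v i)) := by
    ext i j
    by_cases h : i = j
    · subst h; simp
    · rw [Matrix.charmatrix_apply_ne _ _ _ h, Matrix.diagonal_apply_ne _ h,
        Matrix.diagonal_apply_ne _ h, map_zero, neg_zero]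
  rw [this, Matrix.det_diagonal]


/-- The real mammillary matrix of a parameter point. -/
noncomputable def AQ (m : ℕ) (q : Fin (m + 2) ⊕ Fin (m + 1) → ℝ) :
    Matrix (Fin (m + 2)) (Fin (m + 2)) ℝ :=
  mamMatrix m (q (Sum.inl 0)) (fun k => q (Sum.inl k.succ)) (fun k => q (Sum.inr k))

lemma mamA_map (m : ℕ) (q : Fin (m + 2) ⊕ Fin (m + 1) → ℝ) :
    (mamA m).map (MvPolynomial.eval q) = AQ m q := by
  refine Matrix.ext fun i j => ?_
  simp [mamA, AQ, mamMatrix, Matrix.map_apply, apply_ite (MvPolynomial.eval q)]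


lemma mamPhi_inl (m : ℕ) (q : Fin (m+2) ⊕ Fin (m+1) → ℝ) (i : Fin (m + 2)) :
    mamPhi m q (Sum.inl i) = (AQ m q).charpoly.coeff i.val := by
  rw [mamPhi, mamCoeff, Sum.elim_inl, ← mamA_map, Matrix.charpoly_map, Polynomial.coeff_map]

lemma mamPhi_inr (m : ℕ) (q : Fin (m+2) ⊕ Fin (m+1) → ℝ) (i : Fin (m + 1)) :
    mamPhi m q (Sum.inr i) = (∏ k, (Polynomial.X + Polynomial.C (q (Sum.inr k)))).coeff i.val := by
  rw [mamPhi, mamCoeff, Sum.elim_inr]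
  have h1 : ((mamA m).submatrix Fin.succ Fin.succ).map (MvPolynomial.eval q)
      = Matrix.diagonal (fun k => -(q (Sum.inr k))) := by
    rw [← Matrix.submatrix_map, mamA_map, AQ, mam_submatrix]
  rw [← Polynomial.coeff_map, ← Matrix.charpoly_map, h1, charpoly_diagonal]
  congr 1
  refine Finset.prod_congr rfl fun k _ => ?_
  rw [map_neg, sub_neg_eq_add]

/-- The point obtained from `p` by permuting the peripheral compartments by `σ`. -/
noncomputable def mamPerm (m : ℕ) (p : Fin (m+2) ⊕ Fin (m+1) → ℝ) (σ : Equiv.Perm (Fin (m+1))) :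
    Fin (m+2) ⊕ Fin (m+1) → ℝ :=
  Sum.elim (Fin.cases (p (Sum.inl 0)) fun k => p (Sum.inl (σ k).succ))
    (fun k => p (Sum.inr (σ k)))

@[simp] lemma mamPerm_inl0 (m p σ) : mamPerm m p σ (Sum.inl 0) = p (Sum.inl 0) := rfl
@[simp] lemma mamPerm_inl_succ (m p σ) (k : Fin (m+1)) :
    mamPerm m p σ (Sum.inl k.succ) = p (Sum.inl (σ k).succ) := by
  simp [mamPerm]
@[simp] lemma mamPerm_inr (m p σ) (k : Fin (m+1)) :
    mamPerm m p σ (Sum.inr k) = p (Sum.inr (σ k)) := rfl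

lemma erase_prod_comp {M : Type*} [CommMonoid M] {n : ℕ} (σ : Equiv.Perm (Fin n))
    (h : Fin n → M) (k : Fin n) :
    ∏ j ∈ Finset.univ.erase k, h (σ j) = ∏ j ∈ Finset.univ.erase (σ k), h j := by
  rw [← Finset.prod_image (fun x _ y _ hxy => σ.injective hxy),
    Finset.image_erase σ.injective, Finset.image_univ_equiv]

lemma AQ_perm_charpoly (m : ℕ) (p : Fin (m+2) ⊕ Fin (m+1) → ℝ) (σ : Equiv.Perm (Fin (m+1))) :
    (AQ m (mamPerm m p σ)).charpoly = (AQ m p).charpoly := by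
  rw [AQ, AQ, mam_charpoly, mam_charpoly]
  simp only [mamPerm_inl0, mamPerm_inl_succ, mamPerm_inr]
  congr 1
  · rw [Equiv.sum_comp σ (fun k => p (Sum.inl k.succ)),
      Equiv.prod_comp σ (fun k => Polynomial.X + Polynomial.C (p (Sum.inr k)))]
  · rw [Finset.sum_congr rfl fun k _ =>
      congrArg _ (erase_prod_comp σ (fun j => Polynomial.X + Polynomial.C (p (Sum.inr j))) k)]
    exact Equiv.sum_comp σ (fun k => Polynomial.C (p (Sum.inr k) * p (Sum.inl k.succ)) *
      ∏ j ∈ Finset.univ.erase k, (Polynomial.X + Polynomial.C (p (Sum.inr j))))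

lemma mamPhi_perm (m : ℕ) (p : Fin (m+2) ⊕ Fin (m+1) → ℝ) (σ : Equiv.Perm (Fin (m+1))) :
    mamPhi m (mamPerm m p σ) = mamPhi m p := by
  funext s
  cases s with
  | inl i =>
    rw [mamPhi_inl, mamPhi_inl, AQ_perm_charpoly]
  | inr i =>
    rw [mamPhi_inr, mamPhi_inr]
    congr 1
    exact Equiv.prod_comp σ (fun k => Polynomial.X + Polynomial.C (p (Sum.inr k)))

lemma mam_unique (m : ℕ) (q r : Fin (m+2) ⊕ Fin (m+1) → ℝ)
    (hb : ∀ k, q (Sum.inr k) = r (Sum.inr k))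
    (hz : ∀ k, r (Sum.inr k) ≠ 0)
    (hi : Function.Injective fun k => r (Sum.inr k))
    (hP : (AQ m q).charpoly = (AQ m r).charpoly) : q = r := by
  rw [AQ, AQ, mam_charpoly, mam_charpoly] at hP
  simp only [hb] at hP
  have hGne : (∏ k, (Polynomial.X + Polynomial.C (r (Sum.inr k)))) ≠ 0 :=
    (Polynomial.monic_prod_of_monic _ _ fun k _ => Polynomial.monic_X_add_C _).ne_zero
  have key : ∀ l : Fin (m + 1), q (Sum.inl l.succ) = r (Sum.inl l.succ) := by
    intro l
    have hev := congrArg (Polynomial.eval (-(r (Sum.inr l)))) hP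
    simp only [Polynomial.eval_sub, Polynomial.eval_mul, Polynomial.eval_add, Polynomial.eval_X, Polynomial.eval_C, Polynomial.eval_prod, Polynomial.eval_finset_sum] at hev
    have hG0 : (∏ k, (-(r (Sum.inr l)) + r (Sum.inr k))) = 0 :=
      Finset.prod_eq_zero (Finset.mem_univ l) (by ring)
    have hsum : ∀ y : Fin (m+1) → ℝ,
        (∑ k, (r (Sum.inr k) * y k) * ∏ j ∈ Finset.univ.erase k,
          (-(r (Sum.inr l)) + r (Sum.inr j)))
        = (r (Sum.inr l) * y l) * ∏ j ∈ Finset.univ.erase l,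
          (-(r (Sum.inr l)) + r (Sum.inr j)) := by
      intro y
      refine Finset.sum_eq_single l (fun k _ hkl => ?_) (by simp)
      rw [Finset.prod_eq_zero (Finset.mem_erase.mpr ⟨Ne.symm hkl, Finset.mem_univ l⟩)
        (by ring), mul_zero]
    simp only [hG0, mul_zero, zero_sub] at hev
    rw [hsum, hsum, neg_inj] at hev
    have hEne : (∏ j ∈ Finset.univ.erase l, (-(r (Sum.inr l)) + r (Sum.inr j))) ≠ 0 := by
      rw [Finset.prod_ne_zero_iff]
      intro j hj
      have hjl : j ≠ l := (Finset.mem_erase.mp hj).1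
      have : r (Sum.inr j) ≠ r (Sum.inr l) := fun hh => hjl (hi hh)
      intro hc; apply this; linarith
    have := mul_right_cancel₀ hEne hev
    exact mul_left_cancel₀ (hz l) this
  simp only [key] at hP
  rw [sub_left_inj] at hP
  have := mul_right_cancel₀ hGne hP
  rw [add_right_inj, Polynomial.C_inj, add_left_inj] at this
  funext s
  cases s with
  | inl i =>
    induction i using Fin.cases with
    | zero => exact this
    | succ k => exact key k
  | inr k => exact hb k

lemma monic_ext' {p q : Polynomial ℝ} {n : ℕ} (hp : p.Monic) (hq : q.Monic)
    (hpn : p.natDegree = n) (hqn : q.natDegree = n)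
    (h : ∀ i : Fin n, p.coeff i.val = q.coeff i.val) : p = q := by
  ext i
  rcases lt_trichotomy i n with h1 | h1 | h1
  · exact h ⟨i, h1⟩
  · subst h1
    rw [← hpn, hp.coeff_natDegree, hpn, ← hqn, hq.coeff_natDegree]
  · rw [Polynomial.coeff_eq_zero_of_natDegree_lt (by rw [hpn]; exact h1),
      Polynomial.coeff_eq_zero_of_natDegree_lt (by rw [hqn]; exact h1)]

lemma prod_XC_natDegree {n : ℕ} (f : Fin n → ℝ) :
    (∏ k, (Polynomial.X + Polynomial.C (f k))).natDegree = n := by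
  rw [Polynomial.natDegree_prod_of_monic _ _ fun k _ => Polynomial.monic_X_add_C _]
  simp


/-- For the `n`-compartment mammillary model (`n = m + 2 ≥ 2`) and any
point `p` whose coordinates `a₁₂, …, a_{1n}` are pairwise distinct and all nonzero, the
fiber `ψ⁻¹(ψ(p))` has exactly `(n-1)!` elements: the identifiability degree of the
mammillary model is `(n-1)!`. -/
theorem mamPhi_fiber_card (m : ℕ) (p : MamIx m → ℝ)
    (hzero : ∀ k : Fin (m + 1), p (Sum.inr k) ≠ 0)
    (hinj : Function.Injective fun k : Fin (m + 1) => p (Sum.inr k)) :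
    Set.ncard {q : MamIx m → ℝ | mamPhi m q = mamPhi m p} = Nat.factorial (m + 1) := by
  have hset : {q : Fin (m+2) ⊕ Fin (m+1) → ℝ | mamPhi m q = mamPhi m p}
      = Set.range (mamPerm m p) := by
    ext q
    simp only [Set.mem_setOf_eq, Set.mem_range]
    constructor
    · intro hq
      have hD : (∏ k, (Polynomial.X + Polynomial.C (q (Sum.inr k)))) = ∏ k, (Polynomial.X + Polynomial.C (p (Sum.inr k))) := by
        refine monic_ext' (Polynomial.monic_prod_of_monic _ _ fun k _ => Polynomial.monic_X_add_C _)
          (Polynomial.monic_prod_of_monic _ _ fun k _ => Polynomial.monic_X_add_C _)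
          (prod_XC_natDegree _) (prod_XC_natDegree _) fun i => ?_
        have := congrFun hq (Sum.inr i)
        rwa [mamPhi_inr, mamPhi_inr] at this
      have hms : Multiset.map (fun k => q (Sum.inr k)) Finset.univ.val
          = Multiset.map (fun k => p (Sum.inr k)) Finset.univ.val := by
        have hroots : ∀ r : (Fin (m+2) ⊕ Fin (m+1)) → ℝ, (∏ k, (Polynomial.X + Polynomial.C (r (Sum.inr k))))
            = (Multiset.map (fun a => Polynomial.X - Polynomial.C a)
                (Multiset.map (fun k => -(r (Sum.inr k))) Finset.univ.val)).prod := by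
          intro r
          rw [Multiset.map_map, Finset.prod_eq_multiset_prod]
          congr 1
          exact Multiset.map_congr rfl fun k _ => by simp [Function.comp_def, sub_neg_eq_add]
        have h2 := hD
        rw [hroots q, hroots p] at h2
        have h3 := congrArg Polynomial.roots h2
        rw [Polynomial.roots_multiset_prod_X_sub_C, Polynomial.roots_multiset_prod_X_sub_C] at h3
        have h4 := congrArg (Multiset.map (fun x : ℝ => -x)) h3
        simp only [Multiset.map_map, Function.comp_def, neg_neg] at h4
        exact h4
      have hmem : ∀ k, ∃ j, p (Sum.inr j) = q (Sum.inr k) := by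
        intro k
        have h1 : q (Sum.inr k) ∈ Multiset.map (fun k => p (Sum.inr k)) Finset.univ.val := by
          rw [← hms]
          exact Multiset.mem_map_of_mem _ (Finset.mem_univ_val _)
        obtain ⟨j, _, hj⟩ := Multiset.mem_map.mp h1
        exact ⟨j, hj⟩
      choose f hf using hmem
      have hfs : Function.Surjective f := by
        intro j
        have h1 : p (Sum.inr j) ∈ Multiset.map (fun k => q (Sum.inr k)) Finset.univ.val := by
          rw [hms]
          exact Multiset.mem_map_of_mem _ (Finset.mem_univ_val _)
        obtain ⟨k, _, hk⟩ := Multiset.mem_map.mp h1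
        refine ⟨k, hinj ?_⟩
        show p (Sum.inr (f k)) = p (Sum.inr j)
        rw [hf k, hk]
      let σ : Equiv.Perm (Fin (m+1)) := Equiv.ofBijective f (Finite.surjective_iff_bijective.mp hfs)
      refine ⟨σ, ?_⟩
      have hqb : ∀ k, q (Sum.inr k) = mamPerm m p σ (Sum.inr k) := by
        intro k
        rw [mamPerm_inr]
        exact (hf k).symm
      have hPq : (AQ m q).charpoly = (AQ m (mamPerm m p σ)).charpoly := by
        have hQP : (AQ m q).charpoly = (AQ m p).charpoly := by
          refine monic_ext' (Matrix.charpoly_monic _) (Matrix.charpoly_monic _)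
            ((Matrix.charpoly_natDegree_eq_dim _).trans (Fintype.card_fin _))
            ((Matrix.charpoly_natDegree_eq_dim _).trans (Fintype.card_fin _)) fun i => ?_
          have := congrFun hq (Sum.inl i)
          rwa [mamPhi_inl, mamPhi_inl] at this
        rw [hQP, AQ_perm_charpoly]
      refine (mam_unique m q (mamPerm m p σ) hqb (fun k => ?_) ?_ hPq).symm
      · rw [mamPerm_inr]; exact hzero (σ k)
      · intro a b hab
        simp only [mamPerm_inr] at hab
        exact σ.injective (hinj hab)
    · rintro ⟨σ, rfl⟩
      exact mamPhi_perm m p σ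
  have hinjPerm : Function.Injective (mamPerm m p) := by
    intro σ τ h
    refine Equiv.ext fun k => ?_
    exact hinj (congrFun h (Sum.inr k))
  rw [hset, ← Set.image_univ, Set.ncard_image_of_injective _ hinjPerm, Set.ncard_univ,
    Nat.card_eq_fintype_card, Fintype.card_perm, Fintype.card_fin]
end Arrow
end
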